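/- Let δ, κ, λ > 0 and μ ≥ 0 with δλ − κ > 0, and suppose δ/(2κ) < √((κ + δμ)/(δ(δλ − κ))). Then the equation tanh(√(2δ)·α) = δ(δ − 2κα) / (√(2δ)(δ(δλ − κ)α² − (κ + δμ))) has exactly one solution α in (0, ∞), and this unique solution satisfies 1/(2λ) < δ/(2κ) < α < √((κ + δμ)/(δ(δλ − κ))). -/

import Mathlib

/-!
Put `β = √(B/A)` and clear the denominator: on `(0, β)` the equation says that
`D(x) = s (B - A x²) tanh (s x) - d (2 k x - d)` vanishes. `D` is concave on `[0, β]`, being a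
product of two nonnegative concave functions, one decreasing and one increasing, minus an affine
function. Since `D 0 = d² > 0` and `D β = -d (2 k β - d) < 0`, `D` has a zero in `(0, β)`, and
concavity leaves room for only one. Solutions outside `(d / (2 k), β)` are excluded by signs:
there the right-hand side of the equation is `≤ 0 < tanh (s x)`.
-/

open Real Set

namespace Real

theorem hasDerivAt_tanh (x : ℝ) : HasDerivAt tanh (1 / cosh x ^ 2) x := by
  have h := (hasDerivAt_sinh x).div (hasDerivAt_cosh x) (cosh_pos x).ne'
  rw [show sinh / cosh = tanh from funext fun y => (tanh_eq_sinh_div_cosh y).symm] at h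
  rwa [← sq, ← sq, cosh_sq_sub_sinh_sq] at h

theorem deriv_tanh : deriv tanh = fun x => 1 / cosh x ^ 2 :=
  funext fun x => (hasDerivAt_tanh x).deriv

@[fun_prop]
theorem continuous_tanh : Continuous tanh :=
  continuous_iff_continuousAt.2 fun x => (hasDerivAt_tanh x).continuousAt

theorem tanh_strictMono : StrictMono tanh :=
  strictMono_of_deriv_pos fun x => by rw [deriv_tanh]; positivity

theorem tanh_pos {x : ℝ} (hx : 0 < x) : 0 < tanh x := by
  simpa using tanh_strictMono hx

theorem tanh_nonneg {x : ℝ} (hx : 0 ≤ x) : 0 ≤ tanh x := by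
  simpa using tanh_strictMono.monotone hx

theorem strictConcaveOn_tanh : StrictConcaveOn ℝ (Ici 0) tanh := by
  refine StrictAntiOn.strictConcaveOn_of_deriv (convex_Ici 0) continuous_tanh.continuousOn ?_
  rw [interior_Ici, deriv_tanh]
  intro x hx y hy hxy
  have hcosh : cosh x < cosh y := by
    rwa [cosh_lt_cosh, abs_of_pos hx, abs_of_pos (hx.trans hxy)]
  exact one_div_lt_one_div_of_lt (by positivity)
    (pow_lt_pow_left₀ hcosh (cosh_pos x).le two_ne_zero)

end Real

theorem concaveOn_tanh_const_mul {s : ℝ} (hs : 0 ≤ s) :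
    ConcaveOn ℝ (Ici 0) fun x => tanh (s * x) :=
  (strictConcaveOn_tanh.concaveOn.comp_linearMap (LinearMap.mulLeft ℝ s)).subset
    (fun _ hx => mul_nonneg hs hx) (convex_Ici 0)

theorem concaveOn_const_mul_sub_mul_sq {s A : ℝ} (B : ℝ) (hs : 0 ≤ s) (hA : 0 ≤ A) :
    ConcaveOn ℝ univ fun x => s * (B - A * x ^ 2) := by
  refine ⟨convex_univ, fun x _ y _ a b ha hb hab => ?_⟩
  simp only [smul_eq_mul]
  obtain rfl : b = 1 - a := by linarith
  nlinarith [mul_nonneg (mul_nonneg hs hA) (mul_nonneg ha hb), sq_nonneg (x - y)]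

theorem convexOn_affine (c d : ℝ) (S : Set ℝ) (hS : Convex ℝ S) :
    ConvexOn ℝ S fun x => c * x + d := by
  refine ⟨hS, fun x _ y _ a b _ _ hab => le_of_eq ?_⟩
  simp only [smul_eq_mul]
  linear_combination (-d) * hab

section FreeBoundary

variable {d k s A B : ℝ}

noncomputable def freeBoundaryDefect (d k s A B x : ℝ) : ℝ :=
  s * (B - A * x ^ 2) * tanh (s * x) - d * (2 * k * x - d)

theorem continuous_freeBoundaryDefect : Continuous (freeBoundaryDefect d k s A B) := by
  unfold freeBoundaryDefect
  fun_prop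

theorem tanh_eq_div_iff_freeBoundaryDefect_eq_zero {x : ℝ} (hs : s ≠ 0) (hx : A * x ^ 2 ≠ B) :
    tanh (s * x) = d * (d - 2 * k * x) / (s * (A * x ^ 2 - B)) ↔
      freeBoundaryDefect d k s A B x = 0 := by
  rw [eq_div_iff (mul_ne_zero hs (sub_ne_zero.2 hx)), freeBoundaryDefect]
  constructor <;> intro h <;> linarith

theorem concaveOn_freeBoundaryDefect {β : ℝ} (hs : 0 ≤ s) (hA : 0 ≤ A) (hβ : A * β ^ 2 ≤ B) :
    ConcaveOn ℝ (Icc 0 β) (freeBoundaryDefect d k s A B) := by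
  have hprod : ConcaveOn ℝ (Icc 0 β) fun x => s * (B - A * x ^ 2) * tanh (s * x) := by
    refine ConcaveOn.mul ((concaveOn_const_mul_sub_mul_sq B hs hA).subset (subset_univ _)
      (convex_Icc 0 β)) ((concaveOn_tanh_const_mul hs).subset Icc_subset_Ici_self
      (convex_Icc 0 β)) (fun x hx => ?_) (fun x hx => ?_) ?_
    · have : A * x ^ 2 ≤ A * β ^ 2 := by gcongr; exacts [hx.1, hx.2]
      exact mul_nonneg hs (by linarith)
    · exact tanh_nonneg (mul_nonneg hs hx.1)
    · refine AntitoneOn.antivaryOn (fun x hx y _ hxy => ?_) (fun x _ y _ hxy => ?_)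
      · have : A * x ^ 2 ≤ A * y ^ 2 := by gcongr; exact hx.1
        exact mul_le_mul_of_nonneg_left (by linarith) hs
      · exact tanh_strictMono.monotone (mul_le_mul_of_nonneg_left hxy hs)
  have hsplit : freeBoundaryDefect d k s A B =
      (fun x => s * (B - A * x ^ 2) * tanh (s * x)) - fun x => 2 * d * k * x + -d ^ 2 := by
    funext x
    simp only [freeBoundaryDefect, Pi.sub_apply]
    ring
  rw [hsplit]
  exact hprod.sub (convexOn_affine _ _ _ (convex_Icc 0 β))

theorem existsUnique_freeBoundaryDefect_eq_zero {β : ℝ} (hd : 0 < d) (hs : 0 ≤ s) (hA : 0 ≤ A)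
    (hβ : 0 < β) (hAβ : A * β ^ 2 = B) (hkβ : d < 2 * k * β) :
    ∃! x, x ∈ Ioo 0 β ∧ freeBoundaryDefect d k s A B x = 0 := by
  have hconc := concaveOn_freeBoundaryDefect (d := d) (k := k) hs hA hAβ.le
  set D := freeBoundaryDefect d k s A B
  have hD0 : 0 < D 0 := by
    simp only [D, freeBoundaryDefect, mul_zero, tanh_zero, zero_sub, mul_neg, sub_neg_eq_add,
      zero_add]
    positivity
  have hDβ : D β < 0 := by
    simp only [D, freeBoundaryDefect, hAβ, sub_self, mul_zero, zero_mul, zero_sub, neg_neg_iff_pos]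
    exact mul_pos hd (by linarith)
  obtain ⟨x, hx, hDx⟩ := intermediate_value_Ioo' hβ.le continuous_freeBoundaryDefect.continuousOn
    ⟨hDβ, hD0⟩
  have hneg : ∀ x y, 0 < x → x < y → y ≤ β → D x = 0 → D y < 0 := fun x y hx hxy hyβ hDx =>
    hDx ▸ hconc.lt_right_of_left_lt (left_mem_Icc.2 hβ.le) ⟨(hx.trans hxy).le, hyβ⟩
      (by rw [openSegment_eq_Ioo (hx.trans hxy)]; exact ⟨hx, hxy⟩) (by rwa [hDx])
  refine ⟨x, ⟨hx, hDx⟩, fun y ⟨hy, hDy⟩ => ?_⟩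
  rcases lt_trichotomy y x with hyx | rfl | hxy
  · exact absurd hDx (hneg y x hy.1 hyx hx.2.le hDy).ne
  · rfl
  · exact absurd hDy (hneg x y hx.1 hxy hy.2.le hDx).ne

theorem lt_sqrt_div_iff {x : ℝ} (hA : 0 < A) (hx : 0 ≤ x) : x < √(B / A) ↔ A * x ^ 2 < B := by
  rw [lt_sqrt hx, lt_div_iff₀ hA, mul_comm]

theorem mem_Ioo_of_tanh_eq_div (hd : 0 < d) (hk : 0 < k) (hs : 0 < s) (hA : 0 < A)
    (hcβ : d / (2 * k) ≤ √(B / A)) {x : ℝ} (hx : 0 < x)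
    (heq : tanh (s * x) = d * (d - 2 * k * x) / (s * (A * x ^ 2 - B))) :
    x ∈ Ioo (d / (2 * k)) √(B / A) := by
  have hpos := tanh_pos (mul_pos hs hx)
  rw [heq, div_pos_iff] at hpos
  rcases hpos with ⟨hnum, hden⟩ | ⟨hnum, hden⟩
  · have hxc : x < d / (2 * k) := by rw [lt_div_iff₀ (by positivity)]; nlinarith
    have hBx : B < A * x ^ 2 := by nlinarith
    exact absurd ((lt_sqrt_div_iff hA hx.le).1 (hxc.trans_le hcβ)) hBx.not_gt
  · refine ⟨?_, (lt_sqrt_div_iff hA hx.le).2 (by nlinarith)⟩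
    rw [div_lt_iff₀ (by positivity)]
    nlinarith

theorem existsUnique_tanh_eq_div (hd : 0 < d) (hk : 0 < k) (hs : 0 < s) (hA : 0 < A)
    (hcβ : d / (2 * k) < √(B / A)) :
    ∃! x, 0 < x ∧ tanh (s * x) = d * (d - 2 * k * x) / (s * (A * x ^ 2 - B)) := by
  set β := √(B / A)
  have hβ : 0 < β := (div_pos hd (by positivity)).trans hcβ
  have hAβ : A * β ^ 2 = B := by rw [sq_sqrt (sqrt_pos.1 hβ).le, mul_div_cancel₀ _ hA.ne']
  have hkβ : d < 2 * k * β := by rwa [div_lt_iff₀ (by positivity), mul_comm] at hcβ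
  have hiff : ∀ x ∈ Ioo 0 β, tanh (s * x) = d * (d - 2 * k * x) / (s * (A * x ^ 2 - B)) ↔
      freeBoundaryDefect d k s A B x = 0 := fun x hx =>
    tanh_eq_div_iff_freeBoundaryDefect_eq_zero hs.ne' ((lt_sqrt_div_iff hA hx.1.le).1 hx.2).ne
  obtain ⟨x, ⟨hx, hDx⟩, huniq⟩ := existsUnique_freeBoundaryDefect_eq_zero hd hs.le hA.le hβ hAβ hkβ
  refine ⟨x, ⟨hx.1, (hiff x hx).2 hDx⟩, fun y ⟨hy, hyeq⟩ => huniq y ?_⟩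
  have hyβ : y < β := (mem_Ioo_of_tanh_eq_div hd hk hs hA hcβ.le hy hyeq).2
  exact ⟨⟨hy, hyβ⟩, (hiff y ⟨hy, hyβ⟩).1 hyeq⟩

end FreeBoundary

theorem statement10_general (δ κ lam μ : ℝ) (hδ : 0 < δ) (hκ : 0 < κ) (hlam : 0 < lam)
    (h : 0 < δ*lam - κ)
    (hord : δ/(2*κ) < Real.sqrt ((κ + δ*μ)/(δ*(δ*lam - κ)))) :
    (∃! α : ℝ, 0 < α ∧
      Real.tanh (Real.sqrt (2*δ) * α) =
        δ*(δ - 2*κ*α) / (Real.sqrt (2*δ) * (δ*(δ*lam - κ)*α^2 - (κ + δ*μ)))) ∧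
    (∀ α : ℝ, 0 < α →
      Real.tanh (Real.sqrt (2*δ) * α) =
        δ*(δ - 2*κ*α) / (Real.sqrt (2*δ) * (δ*(δ*lam - κ)*α^2 - (κ + δ*μ))) →
      1/(2*lam) < δ/(2*κ) ∧ δ/(2*κ) < α ∧ α < Real.sqrt ((κ + δ*μ)/(δ*(δ*lam - κ)))) := by
  have hs : 0 < √(2 * δ) := sqrt_pos.2 (by positivity)
  have hA : 0 < δ * (δ * lam - κ) := mul_pos hδ h
  refine ⟨existsUnique_tanh_eq_div hδ hκ hs hA hord, fun α hα heq => ⟨?_,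
    mem_Ioo_of_tanh_eq_div hδ hκ hs hA hord.le hα heq⟩⟩
  rw [div_lt_div_iff₀ (by positivity) (by positivity)]
  linarith

/-- Let `δ, κ, λ > 0`, `μ ≥ 0` with `δλ − κ > 0`, and suppose
`δ/(2κ) < √((κ + δμ)/(δ(δλ − κ)))`. Then the equation
`tanh(√(2δ)·α) = δ(δ − 2κα)/(√(2δ)(δ(δλ − κ)α² − (κ + δμ)))` has exactly one solution
`α ∈ (0, ∞)`, and it satisfies `1/(2λ) < δ/(2κ) < α < √((κ + δμ)/(δ(δλ − κ)))`. -/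
theorem statement10 (δ κ lam μ : ℝ) (hδ : 0 < δ) (hκ : 0 < κ) (hlam : 0 < lam)
    (hμ : 0 ≤ μ) (h : 0 < δ*lam - κ)
    (hord : δ/(2*κ) < Real.sqrt ((κ + δ*μ)/(δ*(δ*lam - κ)))) :
    (∃! α : ℝ, 0 < α ∧
      Real.tanh (Real.sqrt (2*δ) * α) =
        δ*(δ - 2*κ*α) / (Real.sqrt (2*δ) * (δ*(δ*lam - κ)*α^2 - (κ + δ*μ)))) ∧
    (∀ α : ℝ, 0 < α →
      Real.tanh (Real.sqrt (2*δ) * α) =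
        δ*(δ - 2*κ*α) / (Real.sqrt (2*δ) * (δ*(δ*lam - κ)*α^2 - (κ + δ*μ))) →
      1/(2*lam) < δ/(2*κ) ∧ δ/(2*κ) < α ∧ α < Real.sqrt ((κ + δ*μ)/(δ*(δ*lam - κ)))) :=
  statement10_general δ κ lam μ hδ hκ hlam h hord
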